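/- arXiv:2510.16818 — 6 statements merged into one kernel-verified Lean document; each statement's English description precedes it below -/
import Mathlib

section
/- Suppose Assumption (A) holds. Let (x̄,ȳ) be a local solution of the bilevel program (BP), i.e. ȳ ∈ S(x̄) and there is an open neighborhood U of (x̄,ȳ) in ℝ^d × ℝ^l such that F(x,y) ≥ F(x̄,ȳ) for every (x,y) ∈ U with y ∈ S(x). Let (ū,s̄) ∈ ℝ^l × ℝ^m satisfy the lower-level KKT conditions at x̄: ∇₂f(x̄,ū) + Σ_i s̄_i ∇₂g_i(x̄,ū) = 0, and s̄_i ≥ 0, g_i(x̄,ū) ≤ 0, s̄_i·g_i(x̄,ū) = 0 for every i. Then (x̄,ȳ,ū,s̄) ∈ F_S and F(x,y) ≥ F(x̄,ȳ) for every (x,y,u,s) ∈ F_S with (x,y) ∈ U; in particular (x̄,ȳ,ū,s̄) is a local solution of SVF, and it is a global solution of SVF when U = ℝ^d × ℝ^l and (x̄,ȳ) is a global solution of (BP). -/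
open scoped InnerProductSpace
open Filter Topology

noncomputable section

/-- Euclidean space ℝ^n. -/
abbrev E (n : ℕ) : Type := EuclideanSpace ℝ (Fin n)

variable {d l m : ℕ}

/-- Gradient with respect to the first argument. -/
noncomputable def grad1 (f : E d × E l → ℝ) (x : E d) (y : E l) : E d :=
  gradient (fun x' => f (x', y)) x

/-- Gradient with respect to the second argument. -/
noncomputable def grad2 (f : E d × E l → ℝ) (x : E d) (y : E l) : E l :=
  gradient (fun y' => f (x, y')) y

/-- The lower level feasible set `Y(x) = {y : g(x,y) ≤ 0}`. -/
def Yset (g : Fin m → E d × E l → ℝ) (x : E d) : Set (E l) :=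
  {y | ∀ i, g i (x, y) ≤ 0}

/-- The lower level solution set `S(x)`. -/
def Sset (f : E d × E l → ℝ) (g : Fin m → E d × E l → ℝ) (x : E d) : Set (E l) :=
  {y | y ∈ Yset g x ∧ ∀ y' ∈ Yset g x, f (x, y) ≤ f (x, y')}

/-- The lower level Lagrangian `L(x,u,s) = f(x,u) + Σᵢ sᵢ gᵢ(x,u)`. -/
noncomputable def Lag (f : E d × E l → ℝ) (g : Fin m → E d × E l → ℝ)
    (x : E d) (u : E l) (s : Fin m → ℝ) : ℝ :=
  f (x, u) + ∑ i, s i * g i (x, u)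

/-- The lower level multiplier set `M(x,u)`. -/
def Mset (f : E d × E l → ℝ) (g : Fin m → E d × E l → ℝ) (x : E d) (u : E l) :
    Set (Fin m → ℝ) :=
  {s | grad2 f x u + ∑ i, s i • grad2 (g i) x u = 0 ∧ (∀ i, 0 ≤ s i) ∧
       ∑ i, s i * g i (x, u) = 0}

/-- Assumption (A): pseudoconvexity of the lower level Lagrangian. -/
def AssumptionA (f : E d × E l → ℝ) (g : Fin m → E d × E l → ℝ) : Prop :=
  ∀ (x : E d), ∀ u1 ∈ Yset g x, ∀ u2 ∈ Yset g x, ∀ s ∈ Mset f g x u2,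
    0 ≤ ⟪u1 - u2, gradient (fun u' => Lag f g x u' s) u2⟫_ℝ →
    Lag f g x u2 s ≤ Lag f g x u1 s

/-- The lower level KKT conditions at `(x,u)` with multiplier `s`. -/
def LLKKT (f : E d × E l → ℝ) (g : Fin m → E d × E l → ℝ)
    (x : E d) (u : E l) (s : Fin m → ℝ) : Prop :=
  grad2 f x u + ∑ i, s i • grad2 (g i) x u = 0 ∧
  ∀ i, 0 ≤ s i ∧ g i (x, u) ≤ 0 ∧ s i * g i (x, u) = 0

/-- Membership in the feasible set `F_S` of the SVF formulation. -/
def FSmem (f : E d × E l → ℝ) (g : Fin m → E d × E l → ℝ)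
    (x : E d) (y u : E l) (s : Fin m → ℝ) : Prop :=
  f (x, y) - f (x, u) ≤ 0 ∧ LLKKT f g x u s ∧ ∀ i, g i (x, y) ≤ 0

/-- The value function `V(x) = inf {f(x,y) : y ∈ Y(x)}`. -/
noncomputable def Vval (f : E d × E l → ℝ) (g : Fin m → E d × E l → ℝ) (x : E d) : ℝ :=
  sInf ((fun y => f (x, y)) '' Yset g x)

/-- Smoothness data: `f`, `g` are `C¹` jointly, and `C²` in the second variable. -/
def SmoothData (f : E d × E l → ℝ) (g : Fin m → E d × E l → ℝ) : Prop :=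
  ContDiff ℝ 1 f ∧ (∀ i, ContDiff ℝ 1 (g i)) ∧
  (∀ x : E d, ContDiff ℝ 2 (fun y : E l => f (x, y))) ∧
  ∀ i, ∀ x : E d, ContDiff ℝ 2 (fun y : E l => g i (x, y))


/-- Gradient of the Lagrangian in the second variable. -/
theorem lag_hasGradientAt {d l m : ℕ} (f : E d × E l → ℝ) (g : Fin m → E d × E l → ℝ)
    (hsmooth : SmoothData f g) (x : E d) (u : E l) (s : Fin m → ℝ) :
    HasGradientAt (fun u' => Lag f g x u' s)
      (grad2 f x u + ∑ i, s i • grad2 (g i) x u) u := by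
  have hf : HasGradientAt (fun y' => f (x, y')) (grad2 f x u) u :=
    (((hsmooth.2.2.1 x).differentiable (by norm_num)) u).hasGradientAt
  have hgi : ∀ i, HasGradientAt (fun y' => g i (x, y')) (grad2 (g i) x u) u := fun i =>
    (((hsmooth.2.2.2 i x).differentiable (by norm_num)) u).hasGradientAt
  have hterm : ∀ i ∈ Finset.univ, HasFDerivAt (fun y' => s i * g i (x, y'))
      (s i • (InnerProductSpace.toDual ℝ (E l) (grad2 (g i) x u) : E l →L[ℝ] ℝ)) u := by
    intro i _
    exact ((hgi i).hasFDerivAt).const_mul (s i)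
  have hsum := HasFDerivAt.fun_sum hterm
  have hL := (hf.hasFDerivAt).add hsum
  rw [hasGradientAt_iff_hasFDerivAt]
  convert hL using 1
  all_goals try rfl
  simp [map_add, map_sum, map_smul]

/-- Under Assumption (A), a KKT point minimizes `f(x,·)` over `Y(x)`. -/
theorem kkt_min {d l m : ℕ} (f : E d × E l → ℝ) (g : Fin m → E d × E l → ℝ)
    (hsmooth : SmoothData f g) (hA : AssumptionA f g)
    (x : E d) (u : E l) (s : Fin m → ℝ) (hkkt : LLKKT f g x u s) :
    ∀ y' ∈ Yset g x, f (x, u) ≤ f (x, y') := by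
  intro y' hy'
  have huY : u ∈ Yset g x := fun i => (hkkt.2 i).2.1
  have hsum0 : ∑ i, s i * g i (x, u) = 0 :=
    Finset.sum_eq_zero fun i _ => (hkkt.2 i).2.2
  have hsM : s ∈ Mset f g x u := ⟨hkkt.1, fun i => (hkkt.2 i).1, hsum0⟩
  have hgrad : gradient (fun u' => Lag f g x u' s) u = 0 := by
    rw [(lag_hasGradientAt f g hsmooth x u s).gradient, hkkt.1]
  have hineq : 0 ≤ ⟪y' - u, gradient (fun u' => Lag f g x u' s) u⟫_ℝ := by
    rw [hgrad]; simp
  have hLag := hA x y' hy' u huY s hsM hineq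
  have h1 : Lag f g x u s = f (x, u) := by simp [Lag, hsum0]
  have h2 : Lag f g x y' s ≤ f (x, y') := by
    have : ∑ i, s i * g i (x, y') ≤ 0 := by
      apply Finset.sum_nonpos
      intro i _
      exact mul_nonpos_of_nonneg_of_nonpos (hkkt.2 i).1 (hy' i)
    simp only [Lag]; linarith
  linarith [hLag]

/-- under Assumption (A), if `(x̄,ȳ)` is a local solution of (BP) (with
neighborhood `U`) and `(ū,s̄)` is a lower level KKT pair at `x̄`, then `(x̄,ȳ,ū,s̄)` is
feasible for SVF and minimizes `F` among SVF-feasible points with `(x,y) ∈ U`; in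
particular it is a local solution of SVF (and a global one when `U = ℝ^d × ℝ^l`). -/
theorem bp_local_solution_gives_svf_local_solution
    {d l m : ℕ} (hd : 0 < d) (hl : 0 < l) (hm : 0 < m)
    (F f : E d × E l → ℝ) (g : Fin m → E d × E l → ℝ)
    (hF : ContDiff ℝ 1 F) (hsmooth : SmoothData f g)
    (hA : AssumptionA f g)
    (xb : E d) (yb : E l) (U : Set (E d × E l))
    (hUopen : IsOpen U) (hUmem : (xb, yb) ∈ U)
    (hfeas : yb ∈ Sset f g xb)
    (hloc : ∀ (x : E d) (y : E l), (x, y) ∈ U → y ∈ Sset f g x → F (xb, yb) ≤ F (x, y))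
    (ub : E l) (sb : Fin m → ℝ)
    (hkkt : LLKKT f g xb ub sb) :
    FSmem f g xb yb ub sb ∧
    ∀ (x : E d) (y u : E l) (s : Fin m → ℝ),
      FSmem f g x y u s → (x, y) ∈ U → F (xb, yb) ≤ F (x, y) := by
  constructor
  · refine ⟨?_, hkkt, fun i => hfeas.1 i⟩
    have hubY : ub ∈ Yset g xb := fun i => (hkkt.2 i).2.1
    have := hfeas.2 ub hubY
    linarith
  · intro x y u s hFS hU
    have huY : u ∈ Yset g x := fun i => (hFS.2.1.2 i).2.1
    have hyY : y ∈ Yset g x := hFS.2.2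
    have hymin : ∀ y' ∈ Yset g x, f (x, y) ≤ f (x, y') := by
      intro y' hy'
      have h1 := kkt_min f g hsmooth hA x u s hFS.2.1 y' hy'
      linarith [hFS.1]
    exact hloc x y hU ⟨hyY, hymin⟩
end
end

section
/- Suppose Assumption (A) holds. Let U be an open neighborhood of (x̄,ȳ) and let (x̄,ȳ,ū,s̄) ∈ F_S satisfy F(x,y) ≥ F(x̄,ȳ) for every (x,y,u,s) ∈ F_S with (x,y) ∈ U. Assume that for every (x,y) ∈ U with y ∈ S(x) there exists a lower-level KKT pair (u,s) at x, i.e. ∇₂f(x,u) + Σ_i s_i ∇₂g_i(x,u) = 0, s_i ≥ 0, g_i(x,u) ≤ 0 and s_i·g_i(x,u) = 0 for every i. Then ȳ ∈ S(x̄) and F(x,y) ≥ F(x̄,ȳ) for every (x,y) ∈ U with y ∈ S(x); i.e. (x̄,ȳ) is a local optimal solution of the bilevel program (BP). -/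
open scoped InnerProductSpace
open Filter Topology

noncomputable section

variable {d l m : ℕ}

/-- Gradient of the Lagrangian in the second variable at a point,
given differentiability. -/
lemma gradient_lag_eq {d l m : ℕ} (f : E d × E l → ℝ) (g : Fin m → E d × E l → ℝ)
    (hsmooth : SmoothData f g) (x : E d) (u : E l) (s : Fin m → ℝ) :
    gradient (fun u' => Lag f g x u' s) u
      = grad2 f x u + ∑ i, s i • grad2 (g i) x u := by
  have hfd : DifferentiableAt ℝ (fun y : E l => f (x, y)) u :=
    ((hsmooth.2.2.1 x).differentiable (by norm_num)).differentiableAt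
  have hgd : ∀ i, DifferentiableAt ℝ (fun y : E l => g i (x, y)) u := fun i =>
    ((hsmooth.2.2.2 i x).differentiable (by norm_num)).differentiableAt
  have hsum : DifferentiableAt ℝ (fun u' : E l => ∑ i, s i * g i (x, u')) u := by
    apply DifferentiableAt.fun_sum
    intro i _
    exact (hgd i).const_mul _
  unfold Lag gradient grad2
  rw [fderiv_fun_add hfd hsum, fderiv_fun_sum (fun i _ => (hgd i).const_mul _)]
  simp only [map_add, map_sum]
  congr 1
  apply Finset.sum_congr rfl
  intro i _
  rw [fderiv_const_mul (hgd i)]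
  simp [gradient]

/-- Under Assumption (A), a lower-level KKT point is a global minimizer of the
lower level problem. -/
lemma kkt_global_min {d l m : ℕ} (f : E d × E l → ℝ) (g : Fin m → E d × E l → ℝ)
    (hsmooth : SmoothData f g) (hA : AssumptionA f g)
    (x : E d) (u : E l) (s : Fin m → ℝ) (hkkt : LLKKT f g x u s) :
    u ∈ Yset g x ∧ ∀ y' ∈ Yset g x, f (x, u) ≤ f (x, y') := by
  have huY : u ∈ Yset g x := fun i => (hkkt.2 i).2.1
  have hsum0 : ∑ i, s i * g i (x, u) = 0 :=
    Finset.sum_eq_zero fun i _ => (hkkt.2 i).2.2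
  have hsM : s ∈ Mset f g x u := ⟨hkkt.1, fun i => (hkkt.2 i).1, hsum0⟩
  refine ⟨huY, fun y' hy' => ?_⟩
  have hgrad0 : gradient (fun u' => Lag f g x u' s) u = 0 := by
    rw [gradient_lag_eq f g hsmooth x u s]; exact hkkt.1
  have hineq : Lag f g x u s ≤ Lag f g x y' s := by
    apply hA x y' hy' u huY s hsM
    rw [hgrad0, inner_zero_right]
  have h1 : Lag f g x u s = f (x, u) := by
    unfold Lag; rw [hsum0, add_zero]
  have h2 : Lag f g x y' s ≤ f (x, y') := by
    unfold Lag
    have : ∑ i, s i * g i (x, y') ≤ 0 :=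
      Finset.sum_nonpos fun i _ =>
        mul_nonpos_of_nonneg_of_nonpos ((hkkt.2 i).1) (hy' i)
    linarith
  linarith [h1 ▸ hineq, h2]

/-- under Assumption (A), if `(x̄,ȳ,ū,s̄) ∈ F_S` minimizes `F` among
SVF-feasible points with `(x,y) ∈ U`, and every BP-feasible point in `U` admits a lower
level KKT pair, then `(x̄,ȳ)` is a local optimal solution of (BP). -/
theorem svf_local_solution_gives_bp_local_solution
    {d l m : ℕ} (hd : 0 < d) (hl : 0 < l) (hm : 0 < m)
    (F f : E d × E l → ℝ) (g : Fin m → E d × E l → ℝ)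
    (hF : ContDiff ℝ 1 F) (hsmooth : SmoothData f g)
    (hA : AssumptionA f g)
    (xb : E d) (yb : E l) (ub : E l) (sb : Fin m → ℝ)
    (U : Set (E d × E l)) (hUopen : IsOpen U) (hUmem : (xb, yb) ∈ U)
    (hfeasS : FSmem f g xb yb ub sb)
    (hloc : ∀ (x : E d) (y u : E l) (s : Fin m → ℝ),
      FSmem f g x y u s → (x, y) ∈ U → F (xb, yb) ≤ F (x, y))
    (hkktexists : ∀ (x : E d) (y : E l), (x, y) ∈ U → y ∈ Sset f g x →
      ∃ (u : E l) (s : Fin m → ℝ), LLKKT f g x u s) :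
    yb ∈ Sset f g xb ∧
    ∀ (x : E d) (y : E l), (x, y) ∈ U → y ∈ Sset f g x → F (xb, yb) ≤ F (x, y) :=  by
  have hkey := kkt_global_min f g hsmooth hA xb ub sb hfeasS.2.1
  have hybS : yb ∈ Sset f g xb := by
    refine ⟨fun i => hfeasS.2.2 i, fun y' hy' => ?_⟩
    have h1 : f (xb, yb) ≤ f (xb, ub) := by linarith [hfeasS.1]
    exact h1.trans (hkey.2 y' hy')
  refine ⟨hybS, fun x y hU hS => ?_⟩
  obtain ⟨u, s, hkkt⟩ := hkktexists x y hU hS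
  have huY : u ∈ Yset g x := fun i => (hkkt.2 i).2.1
  have hfy : f (x, y) ≤ f (x, u) := hS.2 u huY
  exact hloc x y u s ⟨by linarith, hkkt, fun i => hS.1 i⟩ hU
end
end

section
/- Suppose Assumption (A) holds. Then f(x,y) − f(x,u) ≥ 0 for every (x,y,u,s) ∈ F̃, and every (x̄,ȳ,ū,s̄) ∈ F_S satisfies f(x̄,ȳ) = f(x̄,ū); consequently every point of F_S is a global minimizer of the function (x,y,u,s) ↦ f(x,y) − f(x,u) over F̃. -/
open scoped InnerProductSpace
open Filter Topology

noncomputable section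

variable {d l m : ℕ}

/-- Membership in `F̃`: all SVF constraints except `f(x,y) − f(x,u) ≤ 0`. -/
def Ftmem (f : E d × E l → ℝ) (g : Fin m → E d × E l → ℝ)
    (x : E d) (y u : E l) (s : Fin m → ℝ) : Prop :=
  LLKKT f g x u s ∧ ∀ i, g i (x, y) ≤ 0

/-- under Assumption (A), `f(x,y) − f(x,u) ≥ 0` on `F̃`, every point of
`F_S` satisfies `f(x̄,ȳ) = f(x̄,ū)`, and consequently every point of `F_S` is a global
minimizer of `(x,y,u,s) ↦ f(x,y) − f(x,u)` over `F̃`. -/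
theorem fs_points_minimize_gap_over_ftilde
    {d l m : ℕ} (hd : 0 < d) (hl : 0 < l) (hm : 0 < m)
    (f : E d × E l → ℝ) (g : Fin m → E d × E l → ℝ)
    (hsmooth : SmoothData f g)
    (hA : AssumptionA f g) :
    (∀ (x : E d) (y u : E l) (s : Fin m → ℝ),
      Ftmem f g x y u s → 0 ≤ f (x, y) - f (x, u)) ∧
    (∀ (xb : E d) (yb ub : E l) (sb : Fin m → ℝ),
      FSmem f g xb yb ub sb → f (xb, yb) = f (xb, ub)) ∧
    (∀ (xb : E d) (yb ub : E l) (sb : Fin m → ℝ),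
      FSmem f g xb yb ub sb →
      ∀ (x : E d) (y u : E l) (s : Fin m → ℝ), Ftmem f g x y u s →
        f (xb, yb) - f (xb, ub) ≤ f (x, y) - f (x, u)) := by
  have key : ∀ (x : E d) (y u : E l) (s : Fin m → ℝ),
      Ftmem f g x y u s → 0 ≤ f (x, y) - f (x, u) := by
    intro x y u s ⟨⟨hgrad, hkkt⟩, hy⟩
    have hfd : DifferentiableAt ℝ (fun y' => f (x, y')) u :=
      ((hsmooth.2.2.1 x).differentiable (by norm_num)) u
    have hgd : ∀ i, DifferentiableAt ℝ (fun y' => g i (x, y')) u := fun i =>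
      ((hsmooth.2.2.2 i x).differentiable (by norm_num)) u
    -- gradient of the Lagrangian in u
    have hL : HasGradientAt (fun u' => Lag f g x u' s)
        (grad2 f x u + ∑ i, s i • grad2 (g i) x u) u := by
      rw [hasGradientAt_iff_hasFDerivAt, map_add, map_sum]
      simp only [map_smul]
      exact (hfd.hasGradientAt.hasFDerivAt).add
        (HasFDerivAt.fun_sum fun i _ => ((hgd i).hasGradientAt.hasFDerivAt).const_mul (s i))
    have hgrad0 : gradient (fun u' => Lag f g x u' s) u = 0 := by
      rw [hL.gradient, hgrad]
    have hsum0 : ∑ i, s i * g i (x, u) = 0 :=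
      Finset.sum_eq_zero fun i _ => (hkkt i).2.2
    have huY : u ∈ Yset g x := fun i => (hkkt i).2.1
    have hyY : y ∈ Yset g x := hy
    have hsM : s ∈ Mset f g x u := ⟨hgrad, fun i => (hkkt i).1, hsum0⟩
    have hlag : Lag f g x u s ≤ Lag f g x y s := by
      apply hA x y hyY u huY s hsM
      rw [hgrad0, inner_zero_right]
    have h1 : Lag f g x u s = f (x, u) := by simp [Lag, hsum0]
    have h2 : Lag f g x y s ≤ f (x, y) := by
      have : ∑ i, s i * g i (x, y) ≤ 0 :=
        Finset.sum_nonpos fun i _ => mul_nonpos_of_nonneg_of_nonpos (hkkt i).1 (hy i)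
      simpa [Lag] using this
    linarith [h1 ▸ hlag, h2]
  refine ⟨key, fun xb yb ub sb ⟨hle, hk, hgy⟩ =>
    le_antisymm (by linarith [key xb yb ub sb ⟨hk, hgy⟩]) (by linarith [key xb yb ub sb ⟨hk, hgy⟩]),
    fun xb yb ub sb ⟨hle, hk, hgy⟩ x y u s hft => ?_⟩
  have h1 := key xb yb ub sb ⟨hk, hgy⟩
  have h2 := key x y u s hft
  linarith
end
end

section
/- Assume f and g are twice continuously differentiable. Let (x̄,ȳ,ȳ,s̄) ∈ F_S (i.e. with ū = ȳ) be an S-stationary point of SVF: there exist λ₀ ≥ 0 with λ₀(f(x̄,ȳ) − f(x̄,ȳ)) = 0, λ ∈ ℝ^m with λ_i ≥ 0, μ_φ ∈ ℝ^l and μ^g ∈ ℝ^m satisfying the three W-stationarity gradient equations of SVF at (x̄,ȳ,ȳ,s̄), μ^g_i = 0 for i ∈ I_s(x̄,ȳ), ⟨∇₂g_i(x̄,ȳ), μ_φ⟩ = 0 for i ∈ I_g(x̄,ȳ), and μ^g_i ≥ 0 and ⟨∇₂g_i(x̄,ȳ), μ_φ⟩ ≥ 0 for all i ∈ I_0(x̄,ȳ).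 Then (x̄,ȳ,s̄) is an S-stationary point of the KKT reformulation (KP): ∇₂f(x̄,ȳ) + Σ_i s̄_i ∇₂g_i(x̄,ȳ) = 0, s̄ ≥ 0, g(x̄,ȳ) ≤ 0, s̄_i·g_i(x̄,ȳ) = 0 for all i, and there exist μ ∈ ℝ^m and ν_φ ∈ ℝ^l such that: 0 = ∇₁F(x̄,ȳ) + [∇₂₁²f + Σ_{i∈I(x̄,ȳ)} s̄_i ∇₂₁²g_i](x̄,ȳ)ᵀν_φ + Σ_{i∈I(x̄,ȳ)} μ_i ∇₁g_i(x̄,ȳ); 0 = ∇₂F(x̄,ȳ) + Σ_{i∈I(x̄,ȳ)} μ_i ∇₂g_i(x̄,ȳ) + [∇₂₂²f + Σ_{i∈I(x̄,ȳ)} s̄_i ∇₂₂²g_i](x̄,ȳ)ᵀν_φ; μ_i = 0 for i ∈ I_s(x̄,ȳ); ⟨∇₂g_i(x̄,ȳ), ν_φ⟩ = 0 for i ∈ I_g(x̄,ȳ); and μ_i ≥ 0, ⟨∇₂g_i(x̄,ȳ), ν_φ⟩ ≥ 0 for all i ∈ I_0(x̄,ȳ). -/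
/-!
At `ū = ȳ` the value-function multiplier `λ₀` drops out: its term in the `x`-equation is
`λ₀ (∇₁f(x̄,ȳ) - ∇₁f(x̄,ȳ)) = 0`, and `λ₀ ∇₂f(x̄,ȳ)` enters the second and third equations with
opposite signs. Adding those two equations therefore gives the KP equations with `μ = λ + μ^g` and
`ν_φ = μ_φ`. The sign conditions carry over because `λ ≥ 0` vanishes on inactive constraints, and
at a lower level KKT point every inactive constraint lies in `I_s`.
-/

open scoped InnerProductSpace
open Filter Topology

noncomputable section

variable {d l m : ℕ}

/-- `[∇₂₁²f + Σᵢ cᵢ ∇₂₁²gᵢ](x,u)ᵀμ`: the gradient at `x` of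
`x' ↦ ⟪∇₂f(x',u) + Σᵢ cᵢ ∇₂gᵢ(x',u), μ⟫` with `u` fixed. -/
noncomputable def grad21 (f : E d × E l → ℝ) (g : Fin m → E d × E l → ℝ)
    (c : Fin m → ℝ) (μ : E l) (x : E d) (u : E l) : E d :=
  gradient (fun x' => ⟪grad2 f x' u + ∑ i, c i • grad2 (g i) x' u, μ⟫_ℝ) x

/-- `[∇₂₂²f + Σᵢ cᵢ ∇₂₂²gᵢ](x,u)ᵀμ`: the gradient at `u` of
`u' ↦ ⟪∇₂f(x,u') + Σᵢ cᵢ ∇₂gᵢ(x,u'), μ⟫` with `x` fixed. -/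
noncomputable def grad22 (f : E d × E l → ℝ) (g : Fin m → E d × E l → ℝ)
    (c : Fin m → ℝ) (μ : E l) (x : E d) (u : E l) : E l :=
  gradient (fun u' => ⟪grad2 f x u' + ∑ i, c i • grad2 (g i) x u', μ⟫_ℝ) u

/-- The three W-stationarity gradient equations of SVF at `(x,y,u,s)` with multipliers
`(lam0, lam, muphi, mug)`; the sums over active index sets are written as full sums,
the multipliers being required (separately) to vanish off the active sets. -/
noncomputable def WStatEqs (F f : E d × E l → ℝ) (g : Fin m → E d × E l → ℝ)
    (x : E d) (y u : E l) (s : Fin m → ℝ)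
    (lam0 : ℝ) (lam : Fin m → ℝ) (muphi : E l) (mug : Fin m → ℝ) : Prop :=
  grad1 F x y + lam0 • (grad1 f x y - grad1 f x u) + ∑ i, lam i • grad1 (g i) x y
      + grad21 f g s muphi x u + ∑ i, mug i • grad1 (g i) x u = 0 ∧
  grad2 F x y + lam0 • grad2 f x y + ∑ i, lam i • grad2 (g i) x y = 0 ∧
  -(lam0 • grad2 f x u) + ∑ i, mug i • grad2 (g i) x u + grad22 f g s muphi x u = 0

theorem sum_add_smul {R ι V : Type*} [Semiring R] [AddCommMonoid V] [Module R V]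
    (t : Finset ι) (a b : ι → R) (v : ι → V) :
    ∑ i ∈ t, (a + b) i • v i = ∑ i ∈ t, a i • v i + ∑ i ∈ t, b i • v i := by
  simp only [Pi.add_apply, add_smul, Finset.sum_add_distrib]

section

variable {F f : E d × E l → ℝ} {g : Fin m → E d × E l → ℝ}
  {x : E d} {y : E l} {s : Fin m → ℝ}

theorem LLKKT.lt_zero_and_eq_zero_of_ne_zero (h : LLKKT f g x y s) {i : Fin m}
    (hi : g i (x, y) ≠ 0) : g i (x, y) < 0 ∧ s i = 0 :=
  ⟨(h.2 i).2.1.lt_of_ne hi, (mul_eq_zero.mp (h.2 i).2.2).resolve_right hi⟩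

variable {lam0 : ℝ} {lam : Fin m → ℝ} {muphi : E l} {mug : Fin m → ℝ}

theorem WStatEqs.kp_grad1_eq_zero (hW : WStatEqs F f g x y y s lam0 lam muphi mug) :
    grad1 F x y + grad21 f g s muphi x y + ∑ i, (lam + mug) i • grad1 (g i) x y = 0 := by
  have h := hW.1
  rw [sub_self, smul_zero, add_zero] at h
  rw [sum_add_smul, ← h]
  abel

theorem WStatEqs.kp_grad2_eq_zero (hW : WStatEqs F f g x y y s lam0 lam muphi mug) :
    grad2 F x y + ∑ i, (lam + mug) i • grad2 (g i) x y + grad22 f g s muphi x y = 0 :=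
  calc grad2 F x y + ∑ i, (lam + mug) i • grad2 (g i) x y + grad22 f g s muphi x y
      = (grad2 F x y + lam0 • grad2 f x y + ∑ i, lam i • grad2 (g i) x y)
        + (-(lam0 • grad2 f x y) + ∑ i, mug i • grad2 (g i) x y
          + grad22 f g s muphi x y) := by rw [sum_add_smul]; abel
    _ = 0 := by rw [hW.2.1, hW.2.2, add_zero]

end

theorem svf_S_stationary_implies_kp_S_stationary_general
    {d l m : ℕ}
    (F f : E d × E l → ℝ) (g : Fin m → E d × E l → ℝ)
    (xb : E d) (yb : E l) (sb : Fin m → ℝ)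
    (hFS : FSmem f g xb yb yb sb)
    -- S-stationarity of SVF at (x̄,ȳ,ȳ,s̄)
    (lam0 : ℝ) (lam : Fin m → ℝ) (muphi : E l) (mug : Fin m → ℝ)
    (hlam : ∀ i, 0 ≤ lam i)
    (hlamI : ∀ i, g i (xb, yb) ≠ 0 → lam i = 0)
    (hmugIs : ∀ i, g i (xb, yb) < 0 ∧ sb i = 0 → mug i = 0)
    (hW : WStatEqs F f g xb yb yb sb lam0 lam muphi mug)
    (hIg : ∀ i, g i (xb, yb) = 0 → 0 < sb i → ⟪grad2 (g i) xb yb, muphi⟫_ℝ = 0)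
    (hI0 : ∀ i, g i (xb, yb) = 0 → sb i = 0 →
      0 ≤ mug i ∧ 0 ≤ ⟪grad2 (g i) xb yb, muphi⟫_ℝ) :
    -- (x̄,ȳ,s̄) is an S-stationary point of KP
    LLKKT f g xb yb sb ∧
    ∃ (mu : Fin m → ℝ) (nuphi : E l),
      (grad1 F xb yb + grad21 f g sb nuphi xb yb
        + ∑ i, mu i • grad1 (g i) xb yb = 0) ∧
      (grad2 F xb yb + ∑ i, mu i • grad2 (g i) xb yb
        + grad22 f g sb nuphi xb yb = 0) ∧
      (∀ i, g i (xb, yb) < 0 ∧ sb i = 0 → mu i = 0) ∧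
      (∀ i, g i (xb, yb) ≠ 0 → mu i = 0) ∧
      (∀ i, g i (xb, yb) = 0 → 0 < sb i → ⟪grad2 (g i) xb yb, nuphi⟫_ℝ = 0) ∧
      (∀ i, g i (xb, yb) = 0 → sb i = 0 →
        0 ≤ mu i ∧ 0 ≤ ⟪grad2 (g i) xb yb, nuphi⟫_ℝ) := by
  obtain ⟨-, hkkt, -⟩ := hFS
  have hmu_Is : ∀ i, g i (xb, yb) < 0 ∧ sb i = 0 → (lam + mug) i = 0 := fun i hi => by
    rw [Pi.add_apply, hlamI i hi.1.ne, hmugIs i hi, add_zero]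
  refine ⟨hkkt, lam + mug, muphi, hW.kp_grad1_eq_zero, hW.kp_grad2_eq_zero, hmu_Is,
    fun i hi => hmu_Is i (hkkt.lt_zero_and_eq_zero_of_ne_zero hi), hIg, fun i h0 hs => ?_⟩
  obtain ⟨hmug, hinner⟩ := hI0 i h0 hs
  exact ⟨add_nonneg (hlam i) hmug, hinner⟩

/-- an S-stationary point `(x̄,ȳ,ȳ,s̄)` of SVF (with `ū = ȳ`) yields an
S-stationary point `(x̄,ȳ,s̄)` of the KKT reformulation (KP). -/
theorem svf_S_stationary_implies_kp_S_stationary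
    {d l m : ℕ} (hd : 0 < d) (hl : 0 < l) (hm : 0 < m)
    (F f : E d × E l → ℝ) (g : Fin m → E d × E l → ℝ)
    (hF : ContDiff ℝ 1 F) (hf : ContDiff ℝ 2 f) (hg : ∀ i, ContDiff ℝ 2 (g i))
    (xb : E d) (yb : E l) (sb : Fin m → ℝ)
    (hFS : FSmem f g xb yb yb sb)
    -- S-stationarity of SVF at (x̄,ȳ,ȳ,s̄)
    (lam0 : ℝ) (lam : Fin m → ℝ) (muphi : E l) (mug : Fin m → ℝ)
    (hlam0 : 0 ≤ lam0) (hcomp0 : lam0 * (f (xb, yb) - f (xb, yb)) = 0)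
    (hlam : ∀ i, 0 ≤ lam i)
    (hlamI : ∀ i, g i (xb, yb) ≠ 0 → lam i = 0)
    (hmugIs : ∀ i, g i (xb, yb) < 0 ∧ sb i = 0 → mug i = 0)
    (hW : WStatEqs F f g xb yb yb sb lam0 lam muphi mug)
    (hIg : ∀ i, g i (xb, yb) = 0 → 0 < sb i → ⟪grad2 (g i) xb yb, muphi⟫_ℝ = 0)
    (hI0 : ∀ i, g i (xb, yb) = 0 → sb i = 0 →
      0 ≤ mug i ∧ 0 ≤ ⟪grad2 (g i) xb yb, muphi⟫_ℝ) :
    -- (x̄,ȳ,s̄) is an S-stationary point of KP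
    LLKKT f g xb yb sb ∧
    ∃ (mu : Fin m → ℝ) (nuphi : E l),
      (grad1 F xb yb + grad21 f g sb nuphi xb yb
        + ∑ i, mu i • grad1 (g i) xb yb = 0) ∧
      (grad2 F xb yb + ∑ i, mu i • grad2 (g i) xb yb
        + grad22 f g sb nuphi xb yb = 0) ∧
      (∀ i, g i (xb, yb) < 0 ∧ sb i = 0 → mu i = 0) ∧
      (∀ i, g i (xb, yb) ≠ 0 → mu i = 0) ∧
      (∀ i, g i (xb, yb) = 0 → 0 < sb i → ⟪grad2 (g i) xb yb, nuphi⟫_ℝ = 0) ∧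
      (∀ i, g i (xb, yb) = 0 → sb i = 0 →
        0 ≤ mu i ∧ 0 ≤ ⟪grad2 (g i) xb yb, nuphi⟫_ℝ) :=
  svf_S_stationary_implies_kp_S_stationary_general F f g xb yb sb hFS lam0 lam muphi mug hlam hlamI
    hmugIs hW hIg hI0
end
end

section
/- Let r_k > 0 with r_k → 0 and ρ_k > 0 with ρ_k → ρ̄ for some ρ̄ > 0. For each k let (x_k,y_k,u_k,s_k) ∈ ℝ^d × ℝ^l × ℝ^l × ℝ^m be feasible for SVF_{r_k,ρ_k}, and suppose (x_k,y_k,u_k,s_k) → (x̄,ȳ,ū,s̄) as k → ∞. Then (x̄,ȳ,ū,s̄) ∈ F_S. -/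
open scoped InnerProductSpace
open Filter Topology

noncomputable section

variable {d l m : ℕ}

/-- `z(a,s,r,ρ)` from the smoothing barrier augmented Lagrangian method. -/
noncomputable def zfun (a s r ρ : ℝ) : ℝ :=
  (1 / 2) * (Real.sqrt ((ρ * s + a) ^ 2 + 4 * r * ρ) - (ρ * s + a))

/-- `κ(a,s,r,ρ)` from the smoothing barrier augmented Lagrangian method. -/
noncomputable def kfun (a s r ρ : ℝ) : ℝ :=
  (1 / 2) * (Real.sqrt ((ρ * s + a) ^ 2 + 4 * r * ρ) + (ρ * s + a))

/-- Feasibility for the smoothed problem `SVF_{r,ρ}`. -/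
def SVFrFeas (f : E d × E l → ℝ) (g : Fin m → E d × E l → ℝ) (r ρ : ℝ)
    (x : E d) (y u : E l) (s : Fin m → ℝ) : Prop :=
  f (x, y) - f (x, u) ≤ 0 ∧
  grad2 f x u + ∑ i, (kfun (g i (x, u)) (s i) r ρ / ρ) • grad2 (g i) x u = 0 ∧
  (∀ i, zfun (g i (x, u)) (s i) r ρ + g i (x, u) = 0) ∧
  ∀ i, g i (x, y) ≤ 0

section AuxLemmas

lemma grad2_eq_of_contDiff {d l : ℕ} {f : E d × E l → ℝ} (hf : ContDiff ℝ 1 f)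
    (x : E d) (u : E l) :
    grad2 f x u = (InnerProductSpace.toDual ℝ (E l)).symm
      ((fderiv ℝ f (x, u)).comp (ContinuousLinearMap.inr ℝ (E d) (E l))) := by
  have h : HasFDerivAt (fun y : E l => f (x, y))
      ((fderiv ℝ f (x, u)).comp (ContinuousLinearMap.inr ℝ (E d) (E l))) u :=
    ((hf.differentiable one_ne_zero (x, u)).hasFDerivAt).comp u (hasFDerivAt_prodMk_right x u)
  simp [grad2, gradient, h.fderiv]

lemma grad2_continuous {d l : ℕ} {f : E d × E l → ℝ} (hf : ContDiff ℝ 1 f) :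
    Continuous (fun p : E d × E l => grad2 f p.1 p.2) := by
  have h1 : Continuous (fun p : E d × E l => fderiv ℝ f p) := hf.continuous_fderiv one_ne_zero
  have h2 : Continuous (fun L : (E d × E l) →L[ℝ] ℝ =>
      (InnerProductSpace.toDual ℝ (E l)).symm
        (L.comp (ContinuousLinearMap.inr ℝ (E d) (E l)))) :=
    (InnerProductSpace.toDual ℝ (E l)).symm.continuous.comp
      (((ContinuousLinearMap.compL ℝ (E l) (E d × E l) ℝ).flip
        (ContinuousLinearMap.inr ℝ (E d) (E l))).continuous)
  have heq : (fun p : E d × E l => grad2 f p.1 p.2)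
      = fun p : E d × E l => (InnerProductSpace.toDual ℝ (E l)).symm
        ((fderiv ℝ f p).comp (ContinuousLinearMap.inr ℝ (E d) (E l))) :=
    funext fun p => grad2_eq_of_contDiff hf p.1 p.2
  rw [heq]
  exact h2.comp h1

lemma zfun_nonneg (a s r ρ : ℝ) (hr : 0 ≤ r) (hρ : 0 ≤ ρ) : 0 ≤ zfun a s r ρ := by
  have h : ρ * s + a ≤ Real.sqrt ((ρ * s + a) ^ 2 + 4 * r * ρ) :=
    calc ρ * s + a ≤ |ρ * s + a| := le_abs_self _
    _ = Real.sqrt ((ρ * s + a) ^ 2) := (Real.sqrt_sq_eq_abs _).symm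
    _ ≤ _ := Real.sqrt_le_sqrt (by nlinarith)
  unfold zfun; linarith

lemma kfun_nonneg (a s r ρ : ℝ) (hr : 0 ≤ r) (hρ : 0 ≤ ρ) : 0 ≤ kfun a s r ρ := by
  have h : -(ρ * s + a) ≤ Real.sqrt ((ρ * s + a) ^ 2 + 4 * r * ρ) :=
    calc -(ρ * s + a) ≤ |ρ * s + a| := neg_le_abs _
    _ = Real.sqrt ((ρ * s + a) ^ 2) := (Real.sqrt_sq_eq_abs _).symm
    _ ≤ _ := Real.sqrt_le_sqrt (by nlinarith)
  unfold kfun; linarith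

lemma kfun_sub_zfun (a s r ρ : ℝ) : kfun a s r ρ - zfun a s r ρ = ρ * s + a := by
  unfold kfun zfun; ring

lemma zfun_mul_kfun (a s r ρ : ℝ) (hr : 0 ≤ r) (hρ : 0 ≤ ρ) :
    zfun a s r ρ * kfun a s r ρ = r * ρ := by
  have h : Real.sqrt ((ρ * s + a) ^ 2 + 4 * r * ρ) ^ 2 = (ρ * s + a) ^ 2 + 4 * r * ρ :=
    Real.sq_sqrt (by nlinarith)
  unfold zfun kfun; nlinarith [h]

end AuxLemmas

set_option maxHeartbeats 1000000 in
/-- if `r_k → 0`, `ρ_k → ρ̄ > 0`, each `(x_k,y_k,u_k,s_k)` is feasible for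
`SVF_{r_k,ρ_k}` and `(x_k,y_k,u_k,s_k) → (x̄,ȳ,ū,s̄)`, then `(x̄,ȳ,ū,s̄) ∈ F_S`. -/
theorem smoothed_feasible_limits_are_svf_feasible
    {d l m : ℕ} (hd : 0 < d) (hl : 0 < l) (hm : 0 < m)
    (f : E d × E l → ℝ) (g : Fin m → E d × E l → ℝ)
    (hsmooth : SmoothData f g)
    (r ρ : ℕ → ℝ) (hr : ∀ k, 0 < r k) (hρ : ∀ k, 0 < ρ k)
    (ρbar : ℝ) (hρbar : 0 < ρbar)
    (hrlim : Tendsto r atTop (nhds 0)) (hρlim : Tendsto ρ atTop (nhds ρbar))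
    (x : ℕ → E d) (y u : ℕ → E l) (s : ℕ → Fin m → ℝ)
    (hfeas : ∀ k, SVFrFeas f g (r k) (ρ k) (x k) (y k) (u k) (s k))
    (xb : E d) (yb ub : E l) (sb : Fin m → ℝ)
    (hconv : Tendsto (fun k => (x k, y k, u k, s k)) atTop (nhds (xb, yb, ub, sb))) :
    FSmem f g xb yb ub sb := by
  obtain ⟨hf1, hg1, -, -⟩ := hsmooth
  -- component limits
  have hx : Tendsto x atTop (nhds xb) := (continuous_fst.tendsto _).comp hconv
  have hy : Tendsto y atTop (nhds yb) :=
    ((continuous_fst.comp continuous_snd).tendsto _).comp hconv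
  have hu : Tendsto u atTop (nhds ub) :=
    ((continuous_fst.comp (continuous_snd.comp continuous_snd)).tendsto _).comp hconv
  have hs : Tendsto s atTop (nhds sb) :=
    ((continuous_snd.comp (continuous_snd.comp continuous_snd)).tendsto _).comp hconv
  have hsi : ∀ i, Tendsto (fun k => s k i) atTop (nhds (sb i)) :=
    fun i => ((continuous_apply i).tendsto _).comp hs
  have hxu : Tendsto (fun k => (x k, u k)) atTop (nhds (xb, ub)) := hx.prodMk_nhds hu
  have hxy : Tendsto (fun k => (x k, y k)) atTop (nhds (xb, yb)) := hx.prodMk_nhds hy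
  -- pointwise algebraic facts
  have hzeq : ∀ k i, zfun (g i (x k, u k)) (s k i) (r k) (ρ k) = -(g i (x k, u k)) := by
    intro k i
    have := (hfeas k).2.2.1 i
    linarith
  have hk_eq : ∀ k i, kfun (g i (x k, u k)) (s k i) (r k) (ρ k) = ρ k * s k i := by
    intro k i
    have h1 := kfun_sub_zfun (g i (x k, u k)) (s k i) (r k) (ρ k)
    have h2 := hzeq k i
    linarith
  have hcoef : ∀ k i, kfun (g i (x k, u k)) (s k i) (r k) (ρ k) / ρ k = s k i := by
    intro k i
    rw [hk_eq k i]
    exact mul_div_cancel_left₀ _ (hρ k).ne'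
  -- gradient equation with coefficients s k i
  have h0 : ∀ k, grad2 f (x k) (u k) + ∑ i, s k i • grad2 (g i) (x k) (u k) = 0 := by
    intro k
    have h := (hfeas k).2.1
    have hsum : ∑ i, (kfun (g i (x k, u k)) (s k i) (r k) (ρ k) / ρ k) •
        grad2 (g i) (x k) (u k) = ∑ i, s k i • grad2 (g i) (x k) (u k) :=
      Finset.sum_congr rfl fun i _ => by rw [hcoef k i]
    rw [← hsum]
    exact h
  -- limits of gradients
  have hgradf : Tendsto (fun k => grad2 f (x k) (u k)) atTop (nhds (grad2 f xb ub)) :=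
    ((grad2_continuous hf1).tendsto (xb, ub)).comp hxu
  have hgradg : ∀ i, Tendsto (fun k => grad2 (g i) (x k) (u k)) atTop
      (nhds (grad2 (g i) xb ub)) :=
    fun i => ((grad2_continuous (hg1 i)).tendsto (xb, ub)).comp hxu
  have hT : Tendsto (fun k => grad2 f (x k) (u k) + ∑ i, s k i • grad2 (g i) (x k) (u k))
      atTop (nhds (grad2 f xb ub + ∑ i, sb i • grad2 (g i) xb ub)) :=
    hgradf.add (tendsto_finset_sum _ fun i _ => (hsi i).smul (hgradg i))
  have heq0 : grad2 f xb ub + ∑ i, sb i • grad2 (g i) xb ub = 0 :=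
    tendsto_nhds_unique (hT.congr h0) tendsto_const_nhds
  -- first inequality
  have hfxy : Tendsto (fun k => f (x k, y k)) atTop (nhds (f (xb, yb))) :=
    ((hf1.continuous).tendsto _).comp hxy
  have hfxu : Tendsto (fun k => f (x k, u k)) atTop (nhds (f (xb, ub))) :=
    ((hf1.continuous).tendsto _).comp hxu
  have hcond1 : f (xb, yb) - f (xb, ub) ≤ 0 :=
    le_of_tendsto (hfxy.sub hfxu) (Filter.Eventually.of_forall fun k => (hfeas k).1)
  -- g i (xb, ub) ≤ 0
  have hgxu : ∀ i, Tendsto (fun k => g i (x k, u k)) atTop (nhds (g i (xb, ub))) :=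
    fun i => (((hg1 i).continuous).tendsto _).comp hxu
  have hgub : ∀ i, g i (xb, ub) ≤ 0 := by
    intro i
    refine le_of_tendsto (hgxu i) (Filter.Eventually.of_forall fun k => ?_)
    have hz := zfun_nonneg (g i (x k, u k)) (s k i) (r k) (ρ k) (hr k).le (hρ k).le
    have := hzeq k i
    linarith
  -- sb i ≥ 0
  have hsb : ∀ i, 0 ≤ sb i := by
    intro i
    refine ge_of_tendsto (hsi i) (Filter.Eventually.of_forall fun k => ?_)
    rw [← hcoef k i]
    exact div_nonneg (kfun_nonneg _ _ _ _ (hr k).le (hρ k).le) (hρ k).le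
  -- complementarity
  have hcomp : ∀ i, sb i * g i (xb, ub) = 0 := by
    intro i
    have hpt : ∀ k, s k i * g i (x k, u k) = -(r k) := by
      intro k
      have hzk := zfun_mul_kfun (g i (x k, u k)) (s k i) (r k) (ρ k) (hr k).le (hρ k).le
      rw [hzeq k i, hk_eq k i] at hzk
      have hρne : ρ k ≠ 0 := (hρ k).ne'
      have h2 : ρ k * (s k i * g i (x k, u k)) = ρ k * (-(r k)) := by nlinarith [hzk]
      exact mul_left_cancel₀ hρne h2
    have hT1 : Tendsto (fun k => s k i * g i (x k, u k)) atTop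
        (nhds (sb i * g i (xb, ub))) := (hsi i).mul (hgxu i)
    have hT2 : Tendsto (fun k => -(r k)) atTop (nhds (0 : ℝ)) := by
      simpa using hrlim.neg
    exact tendsto_nhds_unique (hT1.congr' (Filter.Eventually.of_forall hpt)) hT2
  -- g i (xb, yb) ≤ 0
  have hgyb : ∀ i, g i (xb, yb) ≤ 0 := by
    intro i
    have hgxy : Tendsto (fun k => g i (x k, y k)) atTop (nhds (g i (xb, yb))) :=
      (((hg1 i).continuous).tendsto _).comp hxy
    exact le_of_tendsto hgxy (Filter.Eventually.of_forall fun k => (hfeas k).2.2.2 i)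
  exact ⟨hcond1, ⟨heq0, fun i => ⟨hsb i, hgub i, hcomp i⟩⟩, hgyb⟩
end
end

section
/- Assume F is continuously differentiable and f, g are twice continuously differentiable. Let r_k > 0 with r_k → 0 and ρ_k > 0 with ρ_k → ρ̄ for some ρ̄ > 0. For each k, let (x_k,y_k,u_k,s_k) be feasible for SVF_{r_k,ρ_k}, write z_i^k := z(g_i(x_k,u_k), s_{k,i}, r_k, ρ_k) and κ_i^k := κ(g_i(x_k,u_k), s_{k,i}, r_k, ρ_k), and suppose there are multipliers λ₀^k ≥ 0, λ^k ∈ ℝ^m with λ_i^k ≥ 0, μ^k ∈ ℝ^l, β^k ∈ ℝ^m such that λ₀^k·(f(x_k,y_k) − f(x_k,u_k)) = 0, λ_i^k·g_i(x_k,y_k) = 0 for all i, and: (i) 0 = ∇₁F(x_k,y_k) + [∇₂₁²f + Σ_i (κ_i^k/ρ_k) ∇₂₁²g_i](x_k,u_k)ᵀμ^k + Σ_i (κ_i^k/(ρ_k(z_i^k + κ_i^k)))·⟨∇₂g_i(x_k,u_k), μ^k⟩·∇₁g_i(x_k,u_k) + Σ_i (β_i^k κ_i^k/(z_i^k + κ_i^k))·∇₁g_i(x_k,u_k)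 + λ₀^k(∇₁f(x_k,y_k) − ∇₁f(x_k,u_k)) + Σ_i λ_i^k ∇₁g_i(x_k,y_k); (ii) 0 = ∇₂F(x_k,y_k) + λ₀^k ∇₂f(x_k,y_k) + Σ_i λ_i^k ∇₂g_i(x_k,y_k); (iii) 0 = −λ₀^k ∇₂f(x_k,u_k) + Σ_i (κ_i^k/(ρ_k(z_i^k + κ_i^k)))·⟨∇₂g_i(x_k,u_k), μ^k⟩·∇₂g_i(x_k,u_k) + Σ_i (β_i^k κ_i^k/(z_i^k + κ_i^k))·∇₂g_i(x_k,u_k) + [∇₂₂²f + Σ_i (κ_i^k/ρ_k) ∇₂₂²g_i](x_k,u_k)ᵀμ^k; (iv) for every i, 0 = κ_i^k·⟨∇₂g_i(x_k,u_k), μ^k⟩/(z_i^k + κ_i^k) − ρ_k β_i^k z_i^k/(z_i^k + κ_i^k). If (x_k,y_k,u_k,s_k) → (x̄,ȳ,ū,s̄) and (λ₀^k, λ^k, μ^k, β^k) → (λ₀, λ, μ, β), then (x̄,ȳ,ū,s̄) ∈ F_S and it is a C-stationary point of SVF: λ₀ ≥ 0, λ₀(f(x̄,ȳ) − f(x̄,ū))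 = 0, λ ≥ 0 with λ_i = 0 for i ∉ I(x̄,ȳ), β_i = 0 for i ∈ I_s(x̄,ū), the three W-stationarity gradient equations of SVF hold at (x̄,ȳ,ū,s̄) with multipliers (λ₀, λ, μ_φ := μ, μ^g := β), ⟨∇₂g_i(x̄,ū), μ⟩ = 0 for i ∈ I_g(x̄,ū), and β_i·⟨∇₂g_i(x̄,ū), μ⟩ ≥ 0 for all i ∈ I_0(x̄,ū). -/
open scoped InnerProductSpace
open Filter Topology

noncomputable section

variable {d l m : ℕ}

/-- `z_i = z(g_i(x,u), s_i, r, ρ)`. -/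
noncomputable def zi (g : Fin m → E d × E l → ℝ) (r ρ : ℝ) (x : E d) (u : E l)
    (s : Fin m → ℝ) (i : Fin m) : ℝ :=
  zfun (g i (x, u)) (s i) r ρ

/-- `κ_i = κ(g_i(x,u), s_i, r, ρ)`. -/
noncomputable def ki (g : Fin m → E d × E l → ℝ) (r ρ : ℝ) (x : E d) (u : E l)
    (s : Fin m → ℝ) (i : Fin m) : ℝ :=
  kfun (g i (x, u)) (s i) r ρ

/-! ### Auxiliary lemmas -/

section Aux
open ContinuousLinearMap InnerProductSpace

lemma grad1_eq' (φ : E d × E l → ℝ) (hφ : ContDiff ℝ 1 φ) (x : E d) (y : E l) :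
    grad1 φ x y = (toDual ℝ (E d)).symm
      ((fderiv ℝ φ (x, y)).comp (ContinuousLinearMap.inl ℝ (E d) (E l))) := by
  have h : HasFDerivAt (fun x' : E d => φ (x', y))
      ((fderiv ℝ φ (x, y)).comp (ContinuousLinearMap.inl ℝ (E d) (E l))) x :=
    ((hφ.differentiable one_ne_zero) (x, y)).hasFDerivAt.comp x (hasFDerivAt_prodMk_left x y)
  rw [grad1, gradient, h.fderiv]

lemma grad2_eq' (φ : E d × E l → ℝ) (hφ : ContDiff ℝ 1 φ) (x : E d) (y : E l) :
    grad2 φ x y = (toDual ℝ (E l)).symm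
      ((fderiv ℝ φ (x, y)).comp (ContinuousLinearMap.inr ℝ (E d) (E l))) := by
  have h : HasFDerivAt (fun y' : E l => φ (x, y'))
      ((fderiv ℝ φ (x, y)).comp (ContinuousLinearMap.inr ℝ (E d) (E l))) y :=
    ((hφ.differentiable one_ne_zero) (x, y)).hasFDerivAt.comp y (hasFDerivAt_prodMk_right x y)
  rw [grad2, gradient, h.fderiv]

lemma continuous_grad1 (φ : E d × E l → ℝ) (hφ : ContDiff ℝ 1 φ) :
    Continuous (fun p : E d × E l => grad1 φ p.1 p.2) := by
  have : (fun p : E d × E l => grad1 φ p.1 p.2)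
      = fun p => (InnerProductSpace.toDual ℝ (E d)).symm
        ((fderiv ℝ φ p).comp (ContinuousLinearMap.inl ℝ (E d) (E l))) := by
    funext p; exact grad1_eq' φ hφ p.1 p.2
  rw [this]
  exact (InnerProductSpace.toDual ℝ (E d)).symm.continuous.comp
    ((hφ.continuous_fderiv one_ne_zero).clm_comp_const _)

lemma continuous_grad2 (φ : E d × E l → ℝ) (hφ : ContDiff ℝ 1 φ) :
    Continuous (fun p : E d × E l => grad2 φ p.1 p.2) := by
  have : (fun p : E d × E l => grad2 φ p.1 p.2)
      = fun p => (InnerProductSpace.toDual ℝ (E l)).symm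
        ((fderiv ℝ φ p).comp (ContinuousLinearMap.inr ℝ (E d) (E l))) := by
    funext p; exact grad2_eq' φ hφ p.1 p.2
  rw [this]
  exact (InnerProductSpace.toDual ℝ (E l)).symm.continuous.comp
    ((hφ.continuous_fderiv one_ne_zero).clm_comp_const _)

lemma inner_grad2' (φ : E d × E l → ℝ) (hφ : ContDiff ℝ 1 φ) (x : E d) (u : E l) (μ : E l) :
    ⟪grad2 φ x u, μ⟫_ℝ = fderiv ℝ φ (x, u) ((0 : E d), μ) := by
  rw [grad2_eq' φ hφ, InnerProductSpace.toDual_symm_apply]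
  simp

/-- the mixed second derivative term in `x`, as an explicit continuous expression -/
noncomputable def mix1 (φ : E d × E l → ℝ) (μ : E l) (p : E d × E l) : E d →L[ℝ] ℝ :=
  (ContinuousLinearMap.apply ℝ ℝ ((0 : E d), μ)).comp
    ((fderiv ℝ (fderiv ℝ φ) p).comp (ContinuousLinearMap.inl ℝ (E d) (E l)))

/-- the second derivative term in `u`, as an explicit continuous expression -/
noncomputable def mix2 (φ : E d × E l → ℝ) (μ : E l) (p : E d × E l) : E l →L[ℝ] ℝ :=
  (ContinuousLinearMap.apply ℝ ℝ ((0 : E d), μ)).comp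
    ((fderiv ℝ (fderiv ℝ φ) p).comp (ContinuousLinearMap.inr ℝ (E d) (E l)))

lemma hasFDerivAt_mix1 (φ : E d × E l → ℝ) (hφ : ContDiff ℝ 2 φ) (μ : E l) (x : E d) (u : E l) :
    HasFDerivAt (fun x' => fderiv ℝ φ (x', u) ((0 : E d), μ)) (mix1 φ μ (x, u)) x := by
  have hD : ContDiff ℝ 1 (fderiv ℝ φ) := hφ.fderiv_right (by norm_num)
  have h1 : HasFDerivAt (fun x' : E d => fderiv ℝ φ (x', u))
      ((fderiv ℝ (fderiv ℝ φ) (x, u)).comp (ContinuousLinearMap.inl ℝ (E d) (E l))) x :=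
    ((hD.differentiable one_ne_zero) (x, u)).hasFDerivAt.comp x (hasFDerivAt_prodMk_left x u)
  exact (ContinuousLinearMap.apply ℝ ℝ ((0 : E d), μ)).hasFDerivAt.comp x h1

lemma hasFDerivAt_mix2 (φ : E d × E l → ℝ) (hφ : ContDiff ℝ 2 φ) (μ : E l) (x : E d) (u : E l) :
    HasFDerivAt (fun u' => fderiv ℝ φ (x, u') ((0 : E d), μ)) (mix2 φ μ (x, u)) u := by
  have hD : ContDiff ℝ 1 (fderiv ℝ φ) := hφ.fderiv_right (by norm_num)
  have h1 : HasFDerivAt (fun u' : E l => fderiv ℝ φ (x, u'))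
      ((fderiv ℝ (fderiv ℝ φ) (x, u)).comp (ContinuousLinearMap.inr ℝ (E d) (E l))) u :=
    ((hD.differentiable one_ne_zero) (x, u)).hasFDerivAt.comp u (hasFDerivAt_prodMk_right x u)
  exact (ContinuousLinearMap.apply ℝ ℝ ((0 : E d), μ)).hasFDerivAt.comp u h1

lemma grad21_eq (f : E d × E l → ℝ) (g : Fin m → E d × E l → ℝ)
    (hf : ContDiff ℝ 2 f) (hg : ∀ i, ContDiff ℝ 2 (g i))
    (c : Fin m → ℝ) (μ : E l) (x : E d) (u : E l) :
    grad21 f g c μ x u = (InnerProductSpace.toDual ℝ (E d)).symm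
      (mix1 f μ (x, u) + ∑ i, c i • mix1 (g i) μ (x, u)) := by
  have hrw : (fun x' => ⟪grad2 f x' u + ∑ i, c i • grad2 (g i) x' u, μ⟫_ℝ)
      = fun x' => fderiv ℝ f (x', u) ((0 : E d), μ)
          + ∑ i, c i * fderiv ℝ (g i) (x', u) ((0 : E d), μ) := by
    funext x'
    rw [inner_add_left, sum_inner, inner_grad2' f (hf.of_le one_le_two)]
    congr 1
    refine Finset.sum_congr rfl fun i _ => ?_
    rw [real_inner_smul_left, inner_grad2' (g i) ((hg i).of_le one_le_two)]
  have hder : HasFDerivAt (fun x' => fderiv ℝ f (x', u) ((0 : E d), μ)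
        + ∑ i, c i * fderiv ℝ (g i) (x', u) ((0 : E d), μ))
      (mix1 f μ (x, u) + ∑ i, c i • mix1 (g i) μ (x, u)) x :=
    (hasFDerivAt_mix1 f hf μ x u).add
      (HasFDerivAt.fun_sum fun i _ => (hasFDerivAt_mix1 (g i) (hg i) μ x u).const_mul (c i))
  rw [grad21, hrw, gradient, hder.fderiv]

lemma grad22_eq (f : E d × E l → ℝ) (g : Fin m → E d × E l → ℝ)
    (hf : ContDiff ℝ 2 f) (hg : ∀ i, ContDiff ℝ 2 (g i))
    (c : Fin m → ℝ) (μ : E l) (x : E d) (u : E l) :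
    grad22 f g c μ x u = (InnerProductSpace.toDual ℝ (E l)).symm
      (mix2 f μ (x, u) + ∑ i, c i • mix2 (g i) μ (x, u)) := by
  have hrw : (fun u' => ⟪grad2 f x u' + ∑ i, c i • grad2 (g i) x u', μ⟫_ℝ)
      = fun u' => fderiv ℝ f (x, u') ((0 : E d), μ)
          + ∑ i, c i * fderiv ℝ (g i) (x, u') ((0 : E d), μ) := by
    funext u'
    rw [inner_add_left, sum_inner, inner_grad2' f (hf.of_le one_le_two)]
    congr 1
    refine Finset.sum_congr rfl fun i _ => ?_
    rw [real_inner_smul_left, inner_grad2' (g i) ((hg i).of_le one_le_two)]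
  have hder : HasFDerivAt (fun u' => fderiv ℝ f (x, u') ((0 : E d), μ)
        + ∑ i, c i * fderiv ℝ (g i) (x, u') ((0 : E d), μ))
      (mix2 f μ (x, u) + ∑ i, c i • mix2 (g i) μ (x, u)) u :=
    (hasFDerivAt_mix2 f hf μ x u).add
      (HasFDerivAt.fun_sum fun i _ => (hasFDerivAt_mix2 (g i) (hg i) μ x u).const_mul (c i))
  rw [grad22, hrw, gradient, hder.fderiv]

lemma continuous_mix1 (φ : E d × E l → ℝ) (hφ : ContDiff ℝ 2 φ) :
    Continuous (fun q : E l × (E d × E l) => mix1 φ q.1 q.2) := by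
  have hD : Continuous (fderiv ℝ (fderiv ℝ φ)) :=
    (hφ.fderiv_right (m := 1) (by norm_num)).continuous_fderiv one_ne_zero
  have h1 : Continuous (fun q : E l × (E d × E l) =>
      (fderiv ℝ (fderiv ℝ φ) q.2).comp (ContinuousLinearMap.inl ℝ (E d) (E l))) :=
    (hD.comp continuous_snd).clm_comp_const _
  have h2 : Continuous (fun q : E l × (E d × E l) =>
      ContinuousLinearMap.apply ℝ ℝ ((0 : E d), q.1)) :=
    (ContinuousLinearMap.apply ℝ ℝ).continuous.comp (continuous_const.prodMk continuous_fst)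
  exact h2.clm_comp h1

lemma continuous_mix2 (φ : E d × E l → ℝ) (hφ : ContDiff ℝ 2 φ) :
    Continuous (fun q : E l × (E d × E l) => mix2 φ q.1 q.2) := by
  have hD : Continuous (fderiv ℝ (fderiv ℝ φ)) :=
    (hφ.fderiv_right (m := 1) (by norm_num)).continuous_fderiv one_ne_zero
  have h1 : Continuous (fun q : E l × (E d × E l) =>
      (fderiv ℝ (fderiv ℝ φ) q.2).comp (ContinuousLinearMap.inr ℝ (E d) (E l))) :=
    (hD.comp continuous_snd).clm_comp_const _
  have h2 : Continuous (fun q : E l × (E d × E l) =>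
      ContinuousLinearMap.apply ℝ ℝ ((0 : E d), q.1)) :=
    (ContinuousLinearMap.apply ℝ ℝ).continuous.comp (continuous_const.prodMk continuous_fst)
  exact h2.clm_comp h1

lemma continuous_grad21 (f : E d × E l → ℝ) (g : Fin m → E d × E l → ℝ)
    (hf : ContDiff ℝ 2 f) (hg : ∀ i, ContDiff ℝ 2 (g i)) :
    Continuous (fun q : (Fin m → ℝ) × E l × E d × E l =>
      grad21 f g q.1 q.2.1 q.2.2.1 q.2.2.2) := by
  have hrw : (fun q : (Fin m → ℝ) × E l × E d × E l =>
      grad21 f g q.1 q.2.1 q.2.2.1 q.2.2.2)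
      = fun q => (InnerProductSpace.toDual ℝ (E d)).symm
        (mix1 f q.2.1 (q.2.2.1, q.2.2.2) + ∑ i, q.1 i • mix1 (g i) q.2.1 (q.2.2.1, q.2.2.2)) := by
    funext q; exact grad21_eq f g hf hg q.1 q.2.1 q.2.2.1 q.2.2.2
  rw [hrw]
  have hp : Continuous (fun q : (Fin m → ℝ) × E l × E d × E l =>
      (q.2.1, (q.2.2.1, q.2.2.2))) := by fun_prop
  refine (InnerProductSpace.toDual ℝ (E d)).symm.continuous.comp ?_
  refine ((continuous_mix1 f hf).comp hp).add ?_
  refine continuous_finset_sum _ fun i _ => ?_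
  exact ((continuous_apply i).comp continuous_fst).smul ((continuous_mix1 (g i) (hg i)).comp hp)

lemma continuous_grad22 (f : E d × E l → ℝ) (g : Fin m → E d × E l → ℝ)
    (hf : ContDiff ℝ 2 f) (hg : ∀ i, ContDiff ℝ 2 (g i)) :
    Continuous (fun q : (Fin m → ℝ) × E l × E d × E l =>
      grad22 f g q.1 q.2.1 q.2.2.1 q.2.2.2) := by
  have hrw : (fun q : (Fin m → ℝ) × E l × E d × E l =>
      grad22 f g q.1 q.2.1 q.2.2.1 q.2.2.2)
      = fun q => (InnerProductSpace.toDual ℝ (E l)).symm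
        (mix2 f q.2.1 (q.2.2.1, q.2.2.2) + ∑ i, q.1 i • mix2 (g i) q.2.1 (q.2.2.1, q.2.2.2)) := by
    funext q; exact grad22_eq f g hf hg q.1 q.2.1 q.2.2.1 q.2.2.2
  rw [hrw]
  have hp : Continuous (fun q : (Fin m → ℝ) × E l × E d × E l =>
      (q.2.1, (q.2.2.1, q.2.2.2))) := by fun_prop
  refine (InnerProductSpace.toDual ℝ (E l)).symm.continuous.comp ?_
  refine ((continuous_mix2 f hf).comp hp).add ?_
  refine continuous_finset_sum _ fun i _ => ?_
  exact ((continuous_apply i).comp continuous_fst).smul ((continuous_mix2 (g i) (hg i)).comp hp)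

lemma abs_lt_sqrt' (A c : ℝ) (hc : 0 < c) : |A| < Real.sqrt (A ^ 2 + c) := by
  have h1 : Real.sqrt (A ^ 2) < Real.sqrt (A ^ 2 + c) :=
    Real.sqrt_lt_sqrt (sq_nonneg A) (lt_add_of_pos_right _ hc)
  rwa [Real.sqrt_sq_eq_abs] at h1

lemma zfun_pos {a s r ρ : ℝ} (hr : 0 < r) (hρ : 0 < ρ) : 0 < zfun a s r ρ := by
  have h := abs_lt_sqrt' (ρ * s + a) (4 * r * ρ) (by positivity)
  have := le_abs_self (ρ * s + a)
  rw [zfun]; nlinarith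

lemma kfun_pos {a s r ρ : ℝ} (hr : 0 < r) (hρ : 0 < ρ) : 0 < kfun a s r ρ := by
  have h := abs_lt_sqrt' (ρ * s + a) (4 * r * ρ) (by positivity)
  have := neg_abs_le (ρ * s + a)
  rw [kfun]; nlinarith

lemma zfun_zero' (a s ρ : ℝ) : zfun a s 0 ρ = (1 / 2) * (|ρ * s + a| - (ρ * s + a)) := by
  rw [zfun]; norm_num [Real.sqrt_sq_eq_abs]

lemma kfun_zero' (a s ρ : ℝ) : kfun a s 0 ρ = (1 / 2) * (|ρ * s + a| + (ρ * s + a)) := by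
  rw [kfun]; norm_num [Real.sqrt_sq_eq_abs]

lemma tendsto_zfun {α : Type*} {F : Filter α} {a s r ρ : α → ℝ} {ab sb rb ρb : ℝ}
    (ha : Tendsto a F (nhds ab)) (hs : Tendsto s F (nhds sb))
    (hr : Tendsto r F (nhds rb)) (hρ : Tendsto ρ F (nhds ρb)) :
    Tendsto (fun k => zfun (a k) (s k) (r k) (ρ k)) F (nhds (zfun ab sb rb ρb)) := by
  have hA : Tendsto (fun k => ρ k * s k + a k) F (nhds (ρb * sb + ab)) := (hρ.mul hs).add ha
  have hS : Tendsto (fun k => Real.sqrt ((ρ k * s k + a k) ^ 2 + 4 * r k * ρ k)) F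
      (nhds (Real.sqrt ((ρb * sb + ab) ^ 2 + 4 * rb * ρb))) :=
    ((hA.pow 2).add ((hr.const_mul 4).mul hρ)).sqrt
  exact (hS.sub hA).const_mul _

lemma tendsto_kfun {α : Type*} {F : Filter α} {a s r ρ : α → ℝ} {ab sb rb ρb : ℝ}
    (ha : Tendsto a F (nhds ab)) (hs : Tendsto s F (nhds sb))
    (hr : Tendsto r F (nhds rb)) (hρ : Tendsto ρ F (nhds ρb)) :
    Tendsto (fun k => kfun (a k) (s k) (r k) (ρ k)) F (nhds (kfun ab sb rb ρb)) := by
  have hA : Tendsto (fun k => ρ k * s k + a k) F (nhds (ρb * sb + ab)) := (hρ.mul hs).add ha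
  have hS : Tendsto (fun k => Real.sqrt ((ρ k * s k + a k) ^ 2 + 4 * r k * ρ k)) F
      (nhds (Real.sqrt ((ρb * sb + ab) ^ 2 + 4 * rb * ρb))) :=
    ((hA.pow 2).add ((hr.const_mul 4).mul hρ)).sqrt
  exact (hS.add hA).const_mul _

lemma limit_alg {ρb s a : ℝ} (hρ : 0 < ρb) (h : zfun a s 0 ρb = -a) :
    0 ≤ s ∧ a ≤ 0 ∧ s * a = 0 ∧ kfun a s 0 ρb = ρb * s := by
  rw [zfun_zero'] at h
  rw [kfun_zero']
  rcases abs_cases (ρb * s + a) with ⟨he, h0⟩ | ⟨he, h0⟩ <;> rw [he] at h ⊢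
  · have ha : a = 0 := by linarith
    have hs : 0 ≤ s := by nlinarith
    exact ⟨hs, le_of_eq ha, by rw [ha, mul_zero], by rw [ha]; ring⟩
  · have hs : s = 0 := by nlinarith
    refine ⟨le_of_eq hs.symm, by nlinarith, by rw [hs, zero_mul], by rw [hs]; ring_nf⟩

end Aux

set_option maxHeartbeats 8000000 in
/-- accumulation points of stationary points of the smoothed problems
`SVF_{r_k,ρ_k}` (with convergent, hence bounded, multipliers) are C-stationary points
of SVF. -/
theorem smoothed_stationary_points_converge_to_C_stationary
    {d l m : ℕ} (hd : 0 < d) (hl : 0 < l) (hm : 0 < m)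
    (F f : E d × E l → ℝ) (g : Fin m → E d × E l → ℝ)
    (hF : ContDiff ℝ 1 F) (hf : ContDiff ℝ 2 f) (hg : ∀ i, ContDiff ℝ 2 (g i))
    (r ρ : ℕ → ℝ) (hr : ∀ k, 0 < r k) (hρ : ∀ k, 0 < ρ k)
    (ρbar : ℝ) (hρbar : 0 < ρbar)
    (hrlim : Tendsto r atTop (nhds 0)) (hρlim : Tendsto ρ atTop (nhds ρbar))
    (x : ℕ → E d) (y u : ℕ → E l) (s : ℕ → Fin m → ℝ)
    (hfeas : ∀ k, SVFrFeas f g (r k) (ρ k) (x k) (y k) (u k) (s k))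
    -- multipliers of the smoothed problem at iteration k
    (lam0 : ℕ → ℝ) (lam : ℕ → Fin m → ℝ) (μ : ℕ → E l) (β : ℕ → Fin m → ℝ)
    (hlam0 : ∀ k, 0 ≤ lam0 k) (hlam : ∀ k i, 0 ≤ lam k i)
    (hcomp0 : ∀ k, lam0 k * (f (x k, y k) - f (x k, u k)) = 0)
    (hcomp : ∀ k i, lam k i * g i (x k, y k) = 0)
    -- (i): stationarity in x
    (heq1 : ∀ k,
      grad1 F (x k) (y k)
        + grad21 f g (fun i => ki g (r k) (ρ k) (x k) (u k) (s k) i / ρ k)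
            (μ k) (x k) (u k)
        + (∑ i, ((ki g (r k) (ρ k) (x k) (u k) (s k) i /
              (ρ k * (zi g (r k) (ρ k) (x k) (u k) (s k) i +
                ki g (r k) (ρ k) (x k) (u k) (s k) i))) *
              ⟪grad2 (g i) (x k) (u k), μ k⟫_ℝ) • grad1 (g i) (x k) (u k))
        + (∑ i, (β k i * ki g (r k) (ρ k) (x k) (u k) (s k) i /
              (zi g (r k) (ρ k) (x k) (u k) (s k) i +
                ki g (r k) (ρ k) (x k) (u k) (s k) i)) • grad1 (g i) (x k) (u k))
        + lam0 k • (grad1 f (x k) (y k) - grad1 f (x k) (u k))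
        + (∑ i, lam k i • grad1 (g i) (x k) (y k)) = 0)
    -- (ii): stationarity in y
    (heq2 : ∀ k,
      grad2 F (x k) (y k) + lam0 k • grad2 f (x k) (y k)
        + (∑ i, lam k i • grad2 (g i) (x k) (y k)) = 0)
    -- (iii): stationarity in u
    (heq3 : ∀ k,
      -(lam0 k • grad2 f (x k) (u k))
        + (∑ i, ((ki g (r k) (ρ k) (x k) (u k) (s k) i /
              (ρ k * (zi g (r k) (ρ k) (x k) (u k) (s k) i +
                ki g (r k) (ρ k) (x k) (u k) (s k) i))) *
              ⟪grad2 (g i) (x k) (u k), μ k⟫_ℝ) • grad2 (g i) (x k) (u k))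
        + (∑ i, (β k i * ki g (r k) (ρ k) (x k) (u k) (s k) i /
              (zi g (r k) (ρ k) (x k) (u k) (s k) i +
                ki g (r k) (ρ k) (x k) (u k) (s k) i)) • grad2 (g i) (x k) (u k))
        + grad22 f g (fun i => ki g (r k) (ρ k) (x k) (u k) (s k) i / ρ k)
            (μ k) (x k) (u k) = 0)
    -- (iv): stationarity in s
    (heq4 : ∀ k i,
      ki g (r k) (ρ k) (x k) (u k) (s k) i * ⟪grad2 (g i) (x k) (u k), μ k⟫_ℝ /
          (zi g (r k) (ρ k) (x k) (u k) (s k) i +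
            ki g (r k) (ρ k) (x k) (u k) (s k) i)
        - ρ k * β k i * zi g (r k) (ρ k) (x k) (u k) (s k) i /
            (zi g (r k) (ρ k) (x k) (u k) (s k) i +
              ki g (r k) (ρ k) (x k) (u k) (s k) i) = 0)
    -- convergence of iterates and multipliers
    (xb : E d) (yb ub : E l) (sb : Fin m → ℝ)
    (hconv : Tendsto (fun k => (x k, y k, u k, s k)) atTop (nhds (xb, yb, ub, sb)))
    (lam0b : ℝ) (lamb : Fin m → ℝ) (μb : E l) (βb : Fin m → ℝ)
    (hconvmul : Tendsto (fun k => (lam0 k, lam k, μ k, β k)) atTop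
      (nhds (lam0b, lamb, μb, βb))) :
    -- (x̄,ȳ,ū,s̄) is feasible and C-stationary for SVF
    FSmem f g xb yb ub sb ∧
    0 ≤ lam0b ∧ lam0b * (f (xb, yb) - f (xb, ub)) = 0 ∧
    (∀ i, 0 ≤ lamb i) ∧
    (∀ i, g i (xb, yb) ≠ 0 → lamb i = 0) ∧
    (∀ i, g i (xb, ub) < 0 ∧ sb i = 0 → βb i = 0) ∧
    WStatEqs F f g xb yb ub sb lam0b lamb μb βb ∧
    (∀ i, g i (xb, ub) = 0 → 0 < sb i → ⟪grad2 (g i) xb ub, μb⟫_ℝ = 0) ∧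
    (∀ i, g i (xb, ub) = 0 → sb i = 0 →
      0 ≤ βb i * ⟪grad2 (g i) xb ub, μb⟫_ℝ) := by
  
  classical
  have hf1 : ContDiff ℝ 1 f := hf.of_le one_le_two
  have hg1 : ∀ i, ContDiff ℝ 1 (g i) := fun i => (hg i).of_le one_le_two
  simp only [ki, zi] at heq1 heq3 heq4
  -- componentwise limits
  have hx : Tendsto x atTop (𝓝 xb) := (continuous_fst.tendsto _).comp hconv
  have hy : Tendsto y atTop (𝓝 yb) :=
    ((continuous_fst.comp continuous_snd).tendsto _).comp hconv
  have hu : Tendsto u atTop (𝓝 ub) :=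
    ((continuous_fst.comp (continuous_snd.comp continuous_snd)).tendsto _).comp hconv
  have hst : Tendsto s atTop (𝓝 sb) :=
    ((continuous_snd.comp (continuous_snd.comp continuous_snd)).tendsto _).comp hconv
  have hsi : ∀ i, Tendsto (fun k => s k i) atTop (𝓝 (sb i)) :=
    fun i => ((continuous_apply i).tendsto _).comp hst
  have hlam0t : Tendsto lam0 atTop (𝓝 lam0b) := (continuous_fst.tendsto _).comp hconvmul
  have hlamt : Tendsto lam atTop (𝓝 lamb) :=
    ((continuous_fst.comp continuous_snd).tendsto _).comp hconvmul
  have hlami : ∀ i, Tendsto (fun k => lam k i) atTop (𝓝 (lamb i)) :=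
    fun i => ((continuous_apply i).tendsto _).comp hlamt
  have hμt : Tendsto μ atTop (𝓝 μb) :=
    ((continuous_fst.comp (continuous_snd.comp continuous_snd)).tendsto _).comp hconvmul
  have hβt : Tendsto β atTop (𝓝 βb) :=
    ((continuous_snd.comp (continuous_snd.comp continuous_snd)).tendsto _).comp hconvmul
  have hβi : ∀ i, Tendsto (fun k => β k i) atTop (𝓝 (βb i)) :=
    fun i => ((continuous_apply i).tendsto _).comp hβt
  have hxu : Tendsto (fun k => (x k, u k)) atTop (𝓝 (xb, ub)) := hx.prodMk_nhds hu
  have hxy : Tendsto (fun k => (x k, y k)) atTop (𝓝 (xb, yb)) := hx.prodMk_nhds hy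
  have hgu : ∀ i, Tendsto (fun k => g i (x k, u k)) atTop (𝓝 (g i (xb, ub))) :=
    fun i => ((hg1 i).continuous.tendsto _).comp hxu
  have hgy : ∀ i, Tendsto (fun k => g i (x k, y k)) atTop (𝓝 (g i (xb, yb))) :=
    fun i => ((hg1 i).continuous.tendsto _).comp hxy
  have hfy : Tendsto (fun k => f (x k, y k)) atTop (𝓝 (f (xb, yb))) :=
    (hf1.continuous.tendsto _).comp hxy
  have hfu : Tendsto (fun k => f (x k, u k)) atTop (𝓝 (f (xb, ub))) :=
    (hf1.continuous.tendsto _).comp hxu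
  -- limits of z and κ
  have hzt : ∀ i, Tendsto (fun k => zfun (g i (x k, u k)) (s k i) (r k) (ρ k)) atTop
      (𝓝 (zfun (g i (xb, ub)) (sb i) 0 ρbar)) :=
    fun i => tendsto_zfun (hgu i) (hsi i) hrlim hρlim
  have hkt : ∀ i, Tendsto (fun k => kfun (g i (x k, u k)) (s k i) (r k) (ρ k)) atTop
      (𝓝 (kfun (g i (xb, ub)) (sb i) 0 ρbar)) :=
    fun i => tendsto_kfun (hgu i) (hsi i) hrlim hρlim
  have hzg : ∀ k i, zfun (g i (x k, u k)) (s k i) (r k) (ρ k) = - g i (x k, u k) := by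
    intro k i; have := (hfeas k).2.2.1 i; linarith
  have hzid : ∀ i, zfun (g i (xb, ub)) (sb i) 0 ρbar = -(g i (xb, ub)) := by
    intro i
    refine tendsto_nhds_unique (hzt i) ?_
    have he : (fun k => zfun (g i (x k, u k)) (s k i) (r k) (ρ k))
        = fun k => - g i (x k, u k) := funext fun k => hzg k i
    rw [he]; exact (hgu i).neg
  have halg : ∀ i, 0 ≤ sb i ∧ g i (xb, ub) ≤ 0 ∧ sb i * g i (xb, ub) = 0 ∧
      kfun (g i (xb, ub)) (sb i) 0 ρbar = ρbar * sb i := fun i => limit_alg hρbar (hzid i)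
  have hct : ∀ i, Tendsto (fun k => kfun (g i (x k, u k)) (s k i) (r k) (ρ k) / ρ k) atTop
      (𝓝 (sb i)) := by
    intro i
    have h := (hkt i).div hρlim (ne_of_gt hρbar)
    rwa [(halg i).2.2.2, mul_div_cancel_left₀ _ (ne_of_gt hρbar)] at h
  have hcdot : Tendsto (fun k => fun i => kfun (g i (x k, u k)) (s k i) (r k) (ρ k) / ρ k)
      atTop (𝓝 sb) := tendsto_pi_nhds.2 hct
  -- positivity along the sequence
  have hzpos : ∀ k i, 0 < zfun (g i (x k, u k)) (s k i) (r k) (ρ k) :=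
    fun k i => zfun_pos (hr k) (hρ k)
  have hkpos : ∀ k i, 0 < kfun (g i (x k, u k)) (s k i) (r k) (ρ k) :=
    fun k i => kfun_pos (hr k) (hρ k)
  have hSpos : ∀ k i, 0 < zfun (g i (x k, u k)) (s k i) (r k) (ρ k)
      + kfun (g i (x k, u k)) (s k i) (r k) (ρ k) :=
    fun k i => add_pos (hzpos k i) (hkpos k i)
  have heq4' : ∀ k i, kfun (g i (x k, u k)) (s k i) (r k) (ρ k) *
        ⟪grad2 (g i) (x k) (u k), μ k⟫_ℝ
      = ρ k * β k i * zfun (g i (x k, u k)) (s k i) (r k) (ρ k) := by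
    intro k i
    have h := heq4 k i
    rw [div_sub_div_same] at h
    have h2 := (div_eq_zero_iff.mp h).resolve_right (ne_of_gt (hSpos k i))
    linarith
  have hcoef : ∀ k i,
      kfun (g i (x k, u k)) (s k i) (r k) (ρ k) /
          (ρ k * (zfun (g i (x k, u k)) (s k i) (r k) (ρ k)
            + kfun (g i (x k, u k)) (s k i) (r k) (ρ k))) *
          ⟪grad2 (g i) (x k) (u k), μ k⟫_ℝ
        + β k i * kfun (g i (x k, u k)) (s k i) (r k) (ρ k) /
          (zfun (g i (x k, u k)) (s k i) (r k) (ρ k)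
            + kfun (g i (x k, u k)) (s k i) (r k) (ρ k)) = β k i := by
    intro k i
    have h := heq4' k i
    have hS := ne_of_gt (hSpos k i)
    have hρ' := ne_of_gt (hρ k)
    rw [div_mul_eq_mul_div, div_add_div _ _ (mul_ne_zero hρ' hS) hS,
      div_eq_iff (mul_ne_zero (mul_ne_zero hρ' hS) hS)]
    linear_combination (zfun (g i (x k, u k)) (s k i) (r k) (ρ k)
      + kfun (g i (x k, u k)) (s k i) (r k) (ρ k)) * h
  -- combine the two sums in (i) and (iii)
  have hsum1 : ∀ k,
      (∑ i, (kfun (g i (x k, u k)) (s k i) (r k) (ρ k) /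
          (ρ k * (zfun (g i (x k, u k)) (s k i) (r k) (ρ k)
            + kfun (g i (x k, u k)) (s k i) (r k) (ρ k))) *
          ⟪grad2 (g i) (x k) (u k), μ k⟫_ℝ) • grad1 (g i) (x k) (u k))
      + (∑ i, (β k i * kfun (g i (x k, u k)) (s k i) (r k) (ρ k) /
          (zfun (g i (x k, u k)) (s k i) (r k) (ρ k)
            + kfun (g i (x k, u k)) (s k i) (r k) (ρ k))) • grad1 (g i) (x k) (u k))
      = ∑ i, β k i • grad1 (g i) (x k) (u k) := by
    intro k
    rw [← Finset.sum_add_distrib]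
    exact Finset.sum_congr rfl fun i _ => by rw [← add_smul, hcoef k i]
  have hsum2 : ∀ k,
      (∑ i, (kfun (g i (x k, u k)) (s k i) (r k) (ρ k) /
          (ρ k * (zfun (g i (x k, u k)) (s k i) (r k) (ρ k)
            + kfun (g i (x k, u k)) (s k i) (r k) (ρ k))) *
          ⟪grad2 (g i) (x k) (u k), μ k⟫_ℝ) • grad2 (g i) (x k) (u k))
      + (∑ i, (β k i * kfun (g i (x k, u k)) (s k i) (r k) (ρ k) /
          (zfun (g i (x k, u k)) (s k i) (r k) (ρ k)
            + kfun (g i (x k, u k)) (s k i) (r k) (ρ k))) • grad2 (g i) (x k) (u k))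
      = ∑ i, β k i • grad2 (g i) (x k) (u k) := by
    intro k
    rw [← Finset.sum_add_distrib]
    exact Finset.sum_congr rfl fun i _ => by rw [← add_smul, hcoef k i]
  -- rearranged stationarity equations
  have heq1' : ∀ k,
      grad1 F (x k) (y k)
        + lam0 k • (grad1 f (x k) (y k) - grad1 f (x k) (u k))
        + (∑ i, lam k i • grad1 (g i) (x k) (y k))
        + grad21 f g (fun i => kfun (g i (x k, u k)) (s k i) (r k) (ρ k) / ρ k)
            (μ k) (x k) (u k)
        + (∑ i, β k i • grad1 (g i) (x k) (u k)) = 0 := by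
    intro k
    have h := heq1 k
    rw [← hsum1 k, ← h]
    abel
  have heq3' : ∀ k,
      -(lam0 k • grad2 f (x k) (u k))
        + (∑ i, β k i • grad2 (g i) (x k) (u k))
        + grad22 f g (fun i => kfun (g i (x k, u k)) (s k i) (r k) (ρ k) / ρ k)
            (μ k) (x k) (u k) = 0 := by
    intro k
    have h := heq3 k
    rw [← hsum2 k, ← h]
    abel
  -- continuity-based limits of all gradient terms
  have hcF1 : Tendsto (fun k => grad1 F (x k) (y k)) atTop (𝓝 (grad1 F xb yb)) :=
    ((continuous_grad1 F hF).tendsto (xb, yb)).comp hxy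
  have hcf1y : Tendsto (fun k => grad1 f (x k) (y k)) atTop (𝓝 (grad1 f xb yb)) :=
    ((continuous_grad1 f hf1).tendsto (xb, yb)).comp hxy
  have hcf1u : Tendsto (fun k => grad1 f (x k) (u k)) atTop (𝓝 (grad1 f xb ub)) :=
    ((continuous_grad1 f hf1).tendsto (xb, ub)).comp hxu
  have hcg1y : ∀ i, Tendsto (fun k => grad1 (g i) (x k) (y k)) atTop
      (𝓝 (grad1 (g i) xb yb)) :=
    fun i => ((continuous_grad1 (g i) (hg1 i)).tendsto (xb, yb)).comp hxy
  have hcg1u : ∀ i, Tendsto (fun k => grad1 (g i) (x k) (u k)) atTop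
      (𝓝 (grad1 (g i) xb ub)) :=
    fun i => ((continuous_grad1 (g i) (hg1 i)).tendsto (xb, ub)).comp hxu
  have hcF2 : Tendsto (fun k => grad2 F (x k) (y k)) atTop (𝓝 (grad2 F xb yb)) :=
    ((continuous_grad2 F hF).tendsto (xb, yb)).comp hxy
  have hcf2y : Tendsto (fun k => grad2 f (x k) (y k)) atTop (𝓝 (grad2 f xb yb)) :=
    ((continuous_grad2 f hf1).tendsto (xb, yb)).comp hxy
  have hcf2u : Tendsto (fun k => grad2 f (x k) (u k)) atTop (𝓝 (grad2 f xb ub)) :=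
    ((continuous_grad2 f hf1).tendsto (xb, ub)).comp hxu
  have hcg2y : ∀ i, Tendsto (fun k => grad2 (g i) (x k) (y k)) atTop
      (𝓝 (grad2 (g i) xb yb)) :=
    fun i => ((continuous_grad2 (g i) (hg1 i)).tendsto (xb, yb)).comp hxy
  have hcg2u : ∀ i, Tendsto (fun k => grad2 (g i) (x k) (u k)) atTop
      (𝓝 (grad2 (g i) xb ub)) :=
    fun i => ((continuous_grad2 (g i) (hg1 i)).tendsto (xb, ub)).comp hxu
  have hq : Tendsto (fun k => ((fun i => kfun (g i (x k, u k)) (s k i) (r k) (ρ k) / ρ k),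
      μ k, x k, u k)) atTop (𝓝 (sb, μb, xb, ub)) :=
    hcdot.prodMk_nhds (hμt.prodMk_nhds (hx.prodMk_nhds hu))
  have hgrad21t : Tendsto (fun k => grad21 f g
      (fun i => kfun (g i (x k, u k)) (s k i) (r k) (ρ k) / ρ k) (μ k) (x k) (u k)) atTop
      (𝓝 (grad21 f g sb μb xb ub)) :=
    (((continuous_grad21 f g hf hg).tendsto (sb, μb, xb, ub)).comp hq).congr (fun k => rfl)
  have hgrad22t : Tendsto (fun k => grad22 f g
      (fun i => kfun (g i (x k, u k)) (s k i) (r k) (ρ k) / ρ k) (μ k) (x k) (u k)) atTop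
      (𝓝 (grad22 f g sb μb xb ub)) :=
    (((continuous_grad22 f g hf hg).tendsto (sb, μb, xb, ub)).comp hq).congr (fun k => rfl)
  -- the three limiting stationarity equations
  have hW1 : grad1 F xb yb + lam0b • (grad1 f xb yb - grad1 f xb ub)
      + (∑ i, lamb i • grad1 (g i) xb yb) + grad21 f g sb μb xb ub
      + (∑ i, βb i • grad1 (g i) xb ub) = 0 := by
    refine tendsto_nhds_unique (l := atTop) (f := fun k =>
      grad1 F (x k) (y k)
        + lam0 k • (grad1 f (x k) (y k) - grad1 f (x k) (u k))
        + (∑ i, lam k i • grad1 (g i) (x k) (y k))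
        + grad21 f g (fun i => kfun (g i (x k, u k)) (s k i) (r k) (ρ k) / ρ k)
            (μ k) (x k) (u k)
        + (∑ i, β k i • grad1 (g i) (x k) (u k))) ?_ ?_
    · exact (((hcF1.add (hlam0t.smul (hcf1y.sub hcf1u))).add
        (tendsto_finset_sum _ fun i _ => (hlami i).smul (hcg1y i))).add hgrad21t).add
        (tendsto_finset_sum _ fun i _ => (hβi i).smul (hcg1u i))
    · simp only [heq1']
      exact tendsto_const_nhds
  have hW2 : grad2 F xb yb + lam0b • grad2 f xb yb
      + (∑ i, lamb i • grad2 (g i) xb yb) = 0 := by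
    refine tendsto_nhds_unique (l := atTop) (f := fun k =>
      grad2 F (x k) (y k) + lam0 k • grad2 f (x k) (y k)
        + (∑ i, lam k i • grad2 (g i) (x k) (y k))) ?_ ?_
    · exact (hcF2.add (hlam0t.smul hcf2y)).add
        (tendsto_finset_sum _ fun i _ => (hlami i).smul (hcg2y i))
    · simp only [heq2]
      exact tendsto_const_nhds
  have hW3 : -(lam0b • grad2 f xb ub) + (∑ i, βb i • grad2 (g i) xb ub)
      + grad22 f g sb μb xb ub = 0 := by
    refine tendsto_nhds_unique (l := atTop) (f := fun k =>
      -(lam0 k • grad2 f (x k) (u k))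
        + (∑ i, β k i • grad2 (g i) (x k) (u k))
        + grad22 f g (fun i => kfun (g i (x k, u k)) (s k i) (r k) (ρ k) / ρ k)
            (μ k) (x k) (u k)) ?_ ?_
    · exact (((hlam0t.smul hcf2u).neg.add
        (tendsto_finset_sum _ fun i _ => (hβi i).smul (hcg2u i))).add hgrad22t)
    · simp only [heq3']
      exact tendsto_const_nhds
  -- feasibility of the limit point
  have hKKT : grad2 f xb ub + ∑ i, sb i • grad2 (g i) xb ub = 0 := by
    have hfeq : ∀ k, grad2 f (x k) (u k)
        + ∑ i, (kfun (g i (x k, u k)) (s k i) (r k) (ρ k) / ρ k) • grad2 (g i) (x k) (u k)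
        = 0 := fun k => (hfeas k).2.1
    refine tendsto_nhds_unique (l := atTop) (f := fun k => grad2 f (x k) (u k)
        + ∑ i, (kfun (g i (x k, u k)) (s k i) (r k) (ρ k) / ρ k) •
          grad2 (g i) (x k) (u k)) ?_ ?_
    · exact hcf2u.add (tendsto_finset_sum _ fun i _ => (hct i).smul (hcg2u i))
    · simp only [hfeq]
      exact tendsto_const_nhds
  have hfle : f (xb, yb) - f (xb, ub) ≤ 0 :=
    le_of_tendsto (hfy.sub hfu) (Filter.Eventually.of_forall fun k => (hfeas k).1)
  have hgyb : ∀ i, g i (xb, yb) ≤ 0 :=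
    fun i => le_of_tendsto (hgy i) (Filter.Eventually.of_forall fun k => (hfeas k).2.2.2 i)
  -- sign and complementarity conditions
  have hlam0b : 0 ≤ lam0b := ge_of_tendsto hlam0t (Filter.Eventually.of_forall hlam0)
  have hlambnn : ∀ i, 0 ≤ lamb i :=
    fun i => ge_of_tendsto (hlami i) (Filter.Eventually.of_forall fun k => hlam k i)
  have hcomp0b : lam0b * (f (xb, yb) - f (xb, ub)) = 0 := by
    refine tendsto_nhds_unique (l := atTop) (f := fun k => lam0 k * (f (x k, y k) - f (x k, u k))) ?_ ?_
    · exact hlam0t.mul (hfy.sub hfu)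
    · simp only [hcomp0]
      exact tendsto_const_nhds
  have hcompb : ∀ i, lamb i * g i (xb, yb) = 0 := by
    intro i
    refine tendsto_nhds_unique (l := atTop) (f := fun k => lam k i * g i (x k, y k)) ?_ ?_
    · exact (hlami i).mul (hgy i)
    · simp only [hcomp]
      exact tendsto_const_nhds
  have hPt : ∀ i, Tendsto (fun k => ⟪grad2 (g i) (x k) (u k), μ k⟫_ℝ) atTop
      (𝓝 ⟪grad2 (g i) xb ub, μb⟫_ℝ) := fun i => (hcg2u i).inner hμt
  have hlim4 : ∀ i, ρbar * sb i * ⟪grad2 (g i) xb ub, μb⟫_ℝ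
      = ρbar * βb i * (-(g i (xb, ub))) := by
    intro i
    refine tendsto_nhds_unique (l := atTop) (f := fun k => kfun (g i (x k, u k)) (s k i) (r k) (ρ k) *
        ⟪grad2 (g i) (x k) (u k), μ k⟫_ℝ) ?_ ?_
    · have h := (hkt i).mul (hPt i)
      rwa [(halg i).2.2.2] at h
    · have he : (fun k => kfun (g i (x k, u k)) (s k i) (r k) (ρ k) *
          ⟪grad2 (g i) (x k) (u k), μ k⟫_ℝ)
          = fun k => ρ k * β k i * zfun (g i (x k, u k)) (s k i) (r k) (ρ k) :=
        funext fun k => heq4' k i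
      rw [he]
      have hzt' : Tendsto (fun k => zfun (g i (x k, u k)) (s k i) (r k) (ρ k)) atTop
          (𝓝 (-(g i (xb, ub)))) := by rw [← hzid i]; exact hzt i
      exact (hρlim.mul (hβi i)).mul hzt'
  have hIg : ∀ i, g i (xb, ub) = 0 → 0 < sb i → ⟪grad2 (g i) xb ub, μb⟫_ℝ = 0 := by
    intro i h0 hpos
    have h := hlim4 i
    rw [h0] at h
    simp only [neg_zero, mul_zero] at h
    exact (mul_eq_zero.mp h).resolve_left (ne_of_gt (mul_pos hρbar hpos))
  have hIs : ∀ i, g i (xb, ub) < 0 ∧ sb i = 0 → βb i = 0 := by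
    rintro i ⟨hlt, hs0⟩
    have h := hlim4 i
    rw [hs0] at h
    simp only [mul_zero, zero_mul] at h
    rcases mul_eq_zero.mp h.symm with h3 | h3
    · exact (mul_eq_zero.mp h3).resolve_left (ne_of_gt hρbar)
    · exact absurd h3 (ne_of_gt (neg_pos.mpr hlt))
  have hI0 : ∀ i, 0 ≤ βb i * ⟪grad2 (g i) xb ub, μb⟫_ℝ := by
    intro i
    refine ge_of_tendsto ((hβi i).mul (hPt i)) (Filter.Eventually.of_forall fun k => ?_)
    have h := heq4' k i
    have hz := hzpos k i
    have hk := hkpos k i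
    have hρ' := hρ k
    have key : β k i * ⟪grad2 (g i) (x k) (u k), μ k⟫_ℝ *
        kfun (g i (x k, u k)) (s k i) (r k) (ρ k)
        = ρ k * β k i ^ 2 * zfun (g i (x k, u k)) (s k i) (r k) (ρ k) := by
      linear_combination (β k i) * h
    nlinarith [key, hz, hk, hρ',
      mul_nonneg (mul_nonneg hρ'.le (sq_nonneg (β k i))) hz.le]
  refine ⟨⟨hfle, ⟨hKKT, fun i => ⟨(halg i).1, (halg i).2.1, (halg i).2.2.1⟩⟩, hgyb⟩,
    hlam0b, hcomp0b, hlambnn,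
    fun i hne => (mul_eq_zero.mp (hcompb i)).resolve_right hne,
    hIs, ⟨hW1, hW2, hW3⟩, hIg, fun i _ _ => hI0 i⟩
end
end
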